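/- The 20-crossing knot K of Figure 10, whose set of boundary slopes contains 80 and −79, is not a Montesinos knot: its boundary slope diameter satisfies bd(K) ≥ 80 − (−79) = 159 > 40 ≥ 2c(K), contradicting the Ichihara–Mizushima bound bd(K) ≤ 2c(K) for Montesinos knots. -/

import Mathlib

/-- Abstract setup of knot invariants: the set of (finite) boundary slopes
`B(K)` of a knot, the boundary-slope diameter
`bd(K) = max{|s − s'| : s, s' ∈ B(K) ∖ {∞}}`, the crossing number `c(K)`,
the Montesinos property, the Ichihara–Mizushima bound `bd(K) ≤ 2c(K)` for
Montesinos knots, and the fact that `bd(K)` bounds the distance between any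
two finite boundary slopes. -/
structure KnotInvariants where
  /-- knots in `S³` -/
  Knot : Type
  /-- the set of finite boundary slopes `B(K) ∖ {∞}` of a knot -/
  boundarySlopes : Knot → Set ℚ
  /-- the boundary slope diameter `bd(K)` -/
  bd : Knot → ℚ
  /-- the crossing number `c(K)` -/
  c : Knot → ℕ
  /-- `K` is a Montesinos knot -/
  IsMontesinos : Knot → Prop
  /-- the diameter dominates the distance between any two finite boundary
  slopes -/
  bd_spec : ∀ K s s', s ∈ boundarySlopes K → s' ∈ boundarySlopes K →
    |s - s'| ≤ bd K
  /-- Ichihara–Mizushima: every Montesinos knot satisfies `bd(K) ≤ 2c(K)` -/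
  ichihara_mizushima : ∀ K, IsMontesinos K → bd K ≤ 2 * (c K : ℚ)

namespace KnotInvariants

theorem not_isMontesinos_of_two_mul_c_lt_bd (I : KnotInvariants) {K : I.Knot}
    (h : 2 * (I.c K : ℚ) < I.bd K) : ¬ I.IsMontesinos K :=
  fun hM => (I.ichihara_mizushima K hM).not_gt h

end KnotInvariants

/-- **Section 4.** The 20-crossing knot `K` of Figure 10, whose set of
boundary slopes contains `80` and `−79`, is not a Montesinos knot: its
boundary slope diameter satisfies `bd(K) ≥ 80 − (−79) = 159 > 40 ≥ 2c(K)`,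
contradicting the Ichihara–Mizushima bound `bd(K) ≤ 2c(K)` for Montesinos
knots. -/
theorem figure_ten_knot_not_Montesinos (I : KnotInvariants) (K : I.Knot)
    (h80 : (80 : ℚ) ∈ I.boundarySlopes K)
    (h79 : (-79 : ℚ) ∈ I.boundarySlopes K)
    (hc : I.c K ≤ 20) :
    ¬ I.IsMontesinos K ∧ (159 : ℚ) ≤ I.bd K ∧ 2 * (I.c K : ℚ) ≤ 40 := by
  have hbd : (159 : ℚ) ≤ I.bd K :=
    calc (159 : ℚ) = |80 - (-79)| := by norm_num
      _ ≤ I.bd K := I.bd_spec K 80 (-79) h80 h79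
  have hc40 : 2 * (I.c K : ℚ) ≤ 40 := by
    have : (I.c K : ℚ) ≤ 20 := mod_cast hc
    linarith
  exact ⟨I.not_isMontesinos_of_two_mul_c_lt_bd (by linarith), hbd, hc40⟩
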